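/- Let t ≥ 0 and 0 ≤ r ≤ 2^t − 1 and k ≥ 2, and let m_1,…,m_k be positive integers. If e_{k-1}^{2^t + 2r} ∉ (x_1^{m_1},…,x_{k-1}^{m_{k-1}}) in F_2[x_1,…,x_{k-1}] and m_k ≥ 2^{t+k-1} + r + 1, then e_k^{2^t + r} ∉ (x_1^{m_1},…,x_k^{m_k}) in F_2[x_1,…,x_k]. -/

import Mathlib

open MvPolynomial

/-- The top Dickson polynomial `e_k = ∏_{0 ≠ α ∈ F_2^k} (α_1 x_1 + ⋯ + α_k x_k)`
in `F_2[x_1,…,x_k]`. -/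
noncomputable def ek (k : ℕ) : MvPolynomial (Fin k) (ZMod 2) :=
  ∏ α ∈ Finset.univ.filter (fun α : Fin k → ZMod 2 => α ≠ 0),
    ∑ i, C (α i) * X i

section CharTwoPoly

variable {R : Type*} [CommRing R] [CharP R 2]

lemma sq_coeff_even (g : Polynomial R) (m : ℕ) :
    (g^2).coeff (2*m) = g.coeff m ^ 2 := by
  rw [← Polynomial.map_frobenius_expand (p := 2) g, Polynomial.coeff_map,
    Polynomial.coeff_expand (by norm_num)]
  simp [Nat.mul_div_cancel_left, frobenius]
  rfl

lemma sq_coeff_odd (g : Polynomial R) (m : ℕ) : (g^2).coeff (2*m+1) = 0 := by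
  rw [← Polynomial.map_frobenius_expand (p := 2) g, Polynomial.coeff_map,
    Polynomial.coeff_expand (by norm_num)]
  have : ¬ (2 ∣ 2*m+1) := by omega
  simp [this, frobenius]

lemma lemA (s : ℕ) (f : Polynomial R) (hsupp : ∀ e ∈ f.support, ∃ j ≤ s, e = 2^j)
    (htop : f.coeff (2^s) = 1) :
    ∀ t r, r < 2^t → (f^(2^t+r)).coeff (2^(t+s)+r) = f.coeff 1 ^ r := by
  intro t
  induction t with
  | zero => intro r hr; interval_cases r; simpa using htop
  | succ t ih =>
    intro r hr
    rcases Nat.even_or_odd r with ⟨r', rfl⟩ | ⟨r', rfl⟩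
    · have hr' : r' < 2^t := by rw [pow_succ] at hr; omega
      have h1 : 2^(t+1) + (r'+r') = (2^t + r') * 2 := by rw [pow_succ]; ring
      have h2 : 2^(t+1+s) + (r'+r') = 2 * (2^(t+s) + r') := by
        rw [show t+1+s = (t+s)+1 by omega, pow_succ]; ring
      rw [h1, h2, pow_mul, sq_coeff_even, ih r' hr', ← pow_mul]
      ring_nf
    · have hr' : r' < 2^t := by rw [pow_succ] at hr; omega
      have h1 : 2^(t+1) + (2*r'+1) = (2^t + r') * 2 + 1 := by rw [pow_succ]; ring
      have h2 : 2^(t+1+s) + (2*r'+1) = 2 * (2^(t+s) + r') + 1 := by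
        rw [show t+1+s = (t+s)+1 by omega, pow_succ]; ring
      set M := 2^(t+s) + r' with hM
      have key : (f^(2^(t+1) + (2*r'+1))).coeff (2*M+1)
          = ((f^(2^t+r'))^2).coeff (2*M) * f.coeff 1 := by
        rw [h1, pow_succ, pow_mul, Polynomial.coeff_mul]
        apply Finset.sum_eq_single (2*M, 1)
        · rintro ⟨i, j⟩ hij hne
          rw [Finset.HasAntidiagonal.mem_antidiagonal] at hij
          simp only at hij ⊢
          rcases Nat.even_or_odd j with ⟨j', rfl⟩ | ⟨j', rfl⟩
          · have : ∃ i', i = 2*i'+1 := ⟨(i-1)/2, by omega⟩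
            obtain ⟨i', rfl⟩ := this
            rw [sq_coeff_odd]; ring
          · by_cases hj : f.coeff (2*j'+1) = 0
            · rw [hj]; ring
            · obtain ⟨a, ha, he⟩ := hsupp _ (Polynomial.mem_support_iff.2 hj)
              have ha0 : a = 0 := by
                by_contra h
                have : 2 ∣ 2^a := dvd_pow_self 2 h
                omega
              subst ha0
              simp only [pow_zero] at he
              exfalso; apply hne
              have : j' = 0 := by omega
              subst this
              have : i = 2*M := by omega
              simp [this]
        · intro h
          simp [Finset.HasAntidiagonal.mem_antidiagonal] at h
      rw [h2, key, sq_coeff_even, ih r' hr']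
      ring

lemma comp_X_add_C (p : Polynomial R) (hsupp : ∀ e ∈ p.support, ∃ j, e = 2^j) (c : R) :
    p.comp (Polynomial.X + Polynomial.C c) = p + Polynomial.C (p.eval c) := by
  haveI : Fact (Nat.Prime 2) := ⟨by norm_num⟩
  have main : p.comp (Polynomial.X + Polynomial.C c)
      = ∑ e ∈ p.support,
        (Polynomial.C (p.coeff e) * Polynomial.X ^ e
          + Polynomial.C (p.coeff e * c ^ e)) := by
    conv_lhs => rw [p.as_sum_support]
    rw [Polynomial.comp, Polynomial.eval₂_finset_sum]
    refine Finset.sum_congr rfl fun e he => ?_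
    obtain ⟨j, rfl⟩ := hsupp e he
    rw [Polynomial.eval₂_monomial, add_pow_char_pow, mul_add, ← Polynomial.C_pow,
      ← Polynomial.C_mul]
  rw [main, Finset.sum_add_distrib]
  congr 1
  · conv_rhs => rw [p.as_sum_support]
    exact Finset.sum_congr rfl fun e _ => Polynomial.C_mul_X_pow_eq_monomial
  · rw [← map_sum]
    congr 1
    rw [Polynomial.eval_eq_sum, Polynomial.sum]

end CharTwoPoly

section Dickson

variable {s : ℕ}

/-- The linear form `β₁ x₁ + ⋯ + β_s x_s`. -/
noncomputable def lform (β : Fin s → ZMod 2) : MvPolynomial (Fin s) (ZMod 2) :=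
  ∑ i, C (β i) * X i

lemma lform_def_eq (β : Fin s → ZMod 2) : lform β = ∑ i, C (β i) * X i := rfl

lemma lform_add (β γ : Fin s → ZMod 2) : lform (β + γ) = lform β + lform γ := by
  simp [lform, add_mul, Finset.sum_add_distrib]

lemma lform_single (i : Fin s) : lform (Pi.single i (1 : ZMod 2)) = X i := by
  rw [lform]
  rw [Finset.sum_eq_single i]
  · simp
  · intro b _ hb
    simp [Pi.single_eq_of_ne hb]
  · simp

lemma lform_zero : lform (0 : Fin s → ZMod 2) = 0 := by simp [lform]

/-- Vectors supported on the first `j` coordinates. -/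
def Wset (s j : ℕ) : Finset (Fin s → ZMod 2) :=
  Finset.univ.filter (fun β => ∀ i : Fin s, j ≤ (i : ℕ) → β i = 0)

lemma mem_Wset {j : ℕ} {β : Fin s → ZMod 2} :
    β ∈ Wset s j ↔ ∀ i : Fin s, j ≤ (i : ℕ) → β i = 0 := by
  simp [Wset]

lemma Wset_zero : Wset s 0 = {0} := by
  ext β
  simp only [mem_Wset, Finset.mem_singleton]
  constructor
  · intro h; funext i; exact h i (Nat.zero_le _)
  · rintro rfl i _; rfl

lemma Wset_univ : Wset s s = Finset.univ := by
  ext β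
  simp only [mem_Wset, Finset.mem_univ, iff_true]
  intro i hi
  exact absurd i.2 (by omega)

/-- The additive polynomial `∏_{β ∈ W_j} (X + ℓ_β)`. -/
noncomputable def Pd (s j : ℕ) : Polynomial (MvPolynomial (Fin s) (ZMod 2)) :=
  ∏ β ∈ Wset s j, (Polynomial.X + Polynomial.C (lform β))

lemma Pd_zero : Pd s 0 = Polynomial.X := by
  rw [Pd, Wset_zero, Finset.prod_singleton, lform_zero]
  simp

lemma zmod2_cases (a : ZMod 2) : a = 0 ∨ a = 1 := by revert a; decide

lemma zmod2_add_self (a : ZMod 2) : a + a = 0 := by revert a; decide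

lemma xx_add_self {s : ℕ} (p : MvPolynomial (Fin s) (ZMod 2)) : p + p = 0 := by
  have : (2 : MvPolynomial (Fin s) (ZMod 2)) = 0 := by
    exact_mod_cast CharP.cast_eq_zero (MvPolynomial (Fin s) (ZMod 2)) 2
  calc p + p = 2 * p := by ring
  _ = 0 := by rw [this]; ring

lemma Pd_succ {j : ℕ} (hj : j < s) :
    Pd s (j+1) = Pd s j *
      ((Pd s j).comp (Polynomial.X + Polynomial.C (X ⟨j, hj⟩))) := by
  classical
  set jf : Fin s := ⟨j, hj⟩
  set δ : Fin s → ZMod 2 := Pi.single jf 1 with hδ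
  have hsplit := Finset.prod_filter_mul_prod_filter_not (Wset s (j+1))
    (fun β => β jf = 0) (fun β => Polynomial.X + Polynomial.C (lform β))
  have h0 : (Wset s (j+1)).filter (fun β => β jf = 0) = Wset s j := by
    ext β
    simp only [Finset.mem_filter, mem_Wset]
    constructor
    · rintro ⟨h1, h2⟩ i hi
      rcases eq_or_lt_of_le hi with h | h
      · have : i = jf := Fin.ext h.symm
        rw [this]; exact h2
      · exact h1 i h
    · intro h
      exact ⟨fun i hi => h i (by omega), h jf (le_refl _)⟩
  have h1 : ((Wset s (j+1)).filter (fun β => ¬ β jf = 0)).prod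
        (fun β => Polynomial.X + Polynomial.C (lform β))
      = ∏ β ∈ Wset s j, (Polynomial.X + Polynomial.C (lform β + X jf)) := by
    apply Finset.prod_nbij' (fun β => β + δ) (fun β => β + δ)
    · intro β hβ
      simp only [Finset.mem_filter, mem_Wset] at hβ
      rw [mem_Wset]
      intro i hi
      rcases eq_or_lt_of_le hi with h | h
      · have hijf : i = jf := Fin.ext h.symm
        rw [hijf]
        have hb1 : β jf = 1 := (zmod2_cases (β jf)).resolve_left hβ.2
        simp only [Pi.add_apply, hδ, Pi.single_eq_same, hb1]
        decide
      · have hd0 : δ i = 0 := by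
          rw [hδ]; apply Pi.single_eq_of_ne
          intro hc; rw [hc] at h; have hjj : (jf : ℕ) = j := rfl; omega
        simp [hd0, hβ.1 i h]
    · intro β hβ
      rw [mem_Wset] at hβ
      simp only [Finset.mem_filter, mem_Wset]
      constructor
      · intro i hi
        have hne : i ≠ jf := by
          intro hc; subst hc; have hjj : (jf : ℕ) = j := rfl; omega
        have : δ i = 0 := by rw [hδ]; exact Pi.single_eq_of_ne hne _
        simp [this, hβ i (by omega)]
      · have : β jf = 0 := hβ jf (le_refl _)
        simp [hδ, Pi.single_eq_same, this]
    · intro β _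
      funext i
      simp only [Pi.add_apply]
      rw [add_assoc]
      rw [zmod2_add_self, add_zero]
    · intro β _
      funext i
      simp only [Pi.add_apply]
      rw [add_assoc]
      rw [zmod2_add_self, add_zero]
    · intro β hβ
      rw [lform_add, hδ, lform_single, add_assoc, xx_add_self, add_zero]
  rw [Pd, ← hsplit, h0, h1, Pd, Polynomial.prod_comp]
  congr 1
  refine Finset.prod_congr rfl fun β _ => ?_
  rw [Polynomial.add_comp, Polynomial.X_comp, Polynomial.C_comp, map_add]
  ring

lemma dickson (s : ℕ) : ∀ j, j ≤ s →
    (∀ e ∈ (Pd s j).support, ∃ i ≤ j, e = 2^i) ∧ (Pd s j).coeff (2^j) = 1 ∧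
      (Pd s j).coeff 1 = ∏ β ∈ (Wset s j).erase 0, lform β := by
  intro j
  induction j with
  | zero =>
    intro _
    rw [Pd_zero]
    refine ⟨?_, by simp, ?_⟩
    · intro e he
      rw [Polynomial.mem_support_iff] at he
      rcases eq_or_ne e 1 with rfl | h
      · exact ⟨0, le_refl _, by norm_num⟩
      · exfalso
        apply he
        rw [Polynomial.coeff_X]
        simp [Ne.symm h]
    · rw [Wset_zero]
      simp
  | succ j ih =>
    intro hj1
    have hj : j < s := by omega
    obtain ⟨ihsupp, ihtop, ihbot⟩ := ih (by omega)
    set c : MvPolynomial (Fin s) (ZMod 2) := X ⟨j, hj⟩ with hc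
    set E : MvPolynomial (Fin s) (ZMod 2) := (Pd s j).eval c with hE
    have hsupp2 : ∀ e ∈ (Pd s j).support, ∃ i, e = 2^i := by
      intro e he; obtain ⟨i, _, h⟩ := ihsupp e he; exact ⟨i, h⟩
    have hstep : Pd s (j+1) = (Pd s j)^2 + Polynomial.C E * Pd s j := by
      rw [Pd_succ hj, comp_X_add_C _ hsupp2, ← hE]
      ring
    have hcoeff : ∀ e, (Pd s (j+1)).coeff e
        = ((Pd s j)^2).coeff e + E * (Pd s j).coeff e := by
      intro e
      rw [hstep, Polynomial.coeff_add, Polynomial.coeff_C_mul]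
    have hnot : (Pd s j).coeff (2^(j+1)) = 0 := by
      by_contra h
      obtain ⟨i, hi, h2⟩ := ihsupp _ (Polynomial.mem_support_iff.2 h)
      have := Nat.pow_right_injective (le_refl 2) h2
      omega
    refine ⟨?_, ?_, ?_⟩
    · intro e he
      rw [Polynomial.mem_support_iff, hcoeff] at he
      by_cases hsq : ((Pd s j)^2).coeff e = 0
      · have : (Pd s j).coeff e ≠ 0 := by
          intro h; rw [hsq, h] at he; simp at he
        obtain ⟨i, hi, h2⟩ := ihsupp _ (Polynomial.mem_support_iff.2 this)
        exact ⟨i, by omega, h2⟩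
      · rcases Nat.even_or_odd e with ⟨m, rfl⟩ | ⟨m, rfl⟩
        · rw [show m + m = 2*m by ring, sq_coeff_even] at hsq
          have : (Pd s j).coeff m ≠ 0 := fun h => hsq (by rw [h]; ring)
          obtain ⟨i, hi, h2⟩ := ihsupp _ (Polynomial.mem_support_iff.2 this)
          exact ⟨i+1, by omega, by subst h2; rw [pow_succ]; ring⟩
        · rw [sq_coeff_odd] at hsq
          exact absurd rfl hsq
    · have h2j : 2^(j+1) = 2*2^j := by rw [pow_succ]; ring
      rw [hcoeff, hnot, h2j, sq_coeff_even, ihtop]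
      ring
    · have hsq1 : ((Pd s j)^2).coeff 1 = 0 := by
        simpa using sq_coeff_odd (Pd s j) 0
      rw [hcoeff, hsq1, ihbot, zero_add]
      -- now show E * ∏_{Wset j \ 0} = ∏_{Wset (j+1) \ 0}
      have hE2 : E = ∏ β ∈ Wset s j, (c + lform β) := by
        rw [hE, Pd, Polynomial.eval_prod]
        refine Finset.prod_congr rfl fun β _ => ?_
        simp
      set jf : Fin s := ⟨j, hj⟩
      set δ : Fin s → ZMod 2 := Pi.single jf 1 with hδ
      have hsplit := Finset.prod_filter_mul_prod_filter_not ((Wset s (j+1)).erase 0)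
        (fun β => β jf = 0) (fun β => lform β)
      have h0 : ((Wset s (j+1)).erase 0).filter (fun β => β jf = 0)
          = (Wset s j).erase 0 := by
        ext β
        simp only [Finset.mem_filter, Finset.mem_erase, mem_Wset]
        constructor
        · rintro ⟨⟨hne, h1⟩, h2⟩
          refine ⟨hne, fun i hi => ?_⟩
          rcases eq_or_lt_of_le hi with h | h
          · rw [show i = jf from Fin.ext h.symm]; exact h2
          · exact h1 i h
        · rintro ⟨hne, h⟩
          exact ⟨⟨hne, fun i hi => h i (by omega)⟩, h jf (le_refl _)⟩
      have h1 : (((Wset s (j+1)).erase 0).filter (fun β => ¬ β jf = 0)).prod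
            (fun β => lform β)
          = ∏ β ∈ Wset s j, (c + lform β) := by
        apply Finset.prod_nbij' (fun β => β + δ) (fun β => β + δ)
        · intro β hβ
          simp only [Finset.mem_filter, Finset.mem_erase, mem_Wset] at hβ
          rw [mem_Wset]
          intro i hi
          rcases eq_or_lt_of_le hi with h | h
          · have hijf : i = jf := Fin.ext h.symm
            rw [hijf]
            have hb1 : β jf = 1 := (zmod2_cases (β jf)).resolve_left hβ.2
            simp only [Pi.add_apply, hδ, Pi.single_eq_same, hb1]
            decide
          · have hd0 : δ i = 0 := by
              rw [hδ]; apply Pi.single_eq_of_ne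
              intro hcx; rw [hcx] at h; have hjj : (jf : ℕ) = j := rfl; omega
            simp [hd0, hβ.1.2 i h]
        · intro β hβ
          rw [mem_Wset] at hβ
          simp only [Finset.mem_filter, Finset.mem_erase, mem_Wset]
          have hval : (β + δ) jf = 1 := by
            have : β jf = 0 := hβ jf (le_refl _)
            simp [hδ, Pi.single_eq_same, this]
          refine ⟨⟨?_, ?_⟩, ?_⟩
          · intro hc0
            rw [hc0] at hval
            simp only [Pi.zero_apply] at hval
            exact absurd hval (by decide)
          · intro i hi
            have hne : i ≠ jf := by
              intro hcx; subst hcx; have hjj : (jf : ℕ) = j := rfl; omega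
            have : δ i = 0 := by rw [hδ]; exact Pi.single_eq_of_ne hne _
            simp [this, hβ i (by omega)]
          · rw [hval]; decide
        · intro β _
          funext i
          simp only [Pi.add_apply]
          rw [add_assoc]
          rw [zmod2_add_self, add_zero]
        · intro β _
          funext i
          simp only [Pi.add_apply]
          rw [add_assoc]
          rw [zmod2_add_self, add_zero]
        · intro β hβ
          rw [lform_add, hδ, lform_single, hc]
          rw [show X jf + (lform β + X jf) = lform β + (X jf + X jf) from by ring,
            xx_add_self, add_zero]
      rw [← hsplit, h0, h1, hE2]
      ring

end Dickson

section Factor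

variable {s : ℕ}

/-- Split off the last variable. -/
noncomputable def phi (s : ℕ) :
    MvPolynomial (Fin (s+1)) (ZMod 2) ≃ₐ[ZMod 2]
      Polynomial (MvPolynomial (Fin s) (ZMod 2)) :=
  (renameEquiv (ZMod 2) finSuccEquivLast).trans (optionEquivLeft (ZMod 2) (Fin s))

lemma phi_X_castSucc (i : Fin s) :
    phi s (X (Fin.castSucc i)) = Polynomial.C (X i) := by
  simp [phi, renameEquiv, rename_X, finSuccEquivLast_castSucc, optionEquivLeft_X_some]

lemma phi_X_last : phi s (X (Fin.last s)) = Polynomial.X := by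
  simp [phi, renameEquiv, rename_X, finSuccEquivLast_last, optionEquivLeft_X_none]

lemma phi_C (a : ZMod 2) : phi s (C a) = Polynomial.C (C a) := by
  simp [phi, renameEquiv, rename_C, optionEquivLeft_C]

lemma phi_lin (α : Fin (s+1) → ZMod 2) :
    phi s (∑ i, C (α i) * X i)
      = Polynomial.C (lform (α ∘ Fin.castSucc))
        + Polynomial.C (C (α (Fin.last s))) * Polynomial.X := by
  rw [map_sum, Fin.sum_univ_castSucc]
  congr 1
  · rw [lform_def_eq, map_sum]
    refine Finset.sum_congr rfl fun i _ => ?_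
    rw [map_mul, phi_C, phi_X_castSucc, ← Polynomial.C_mul]
    rfl
  · rw [map_mul, phi_C, phi_X_last]

lemma snoc_ne_zero_of_ne_zero {β : Fin s → ZMod 2} (hβ : β ≠ 0) (a : ZMod 2) :
    (Fin.snoc β a : Fin (s+1) → ZMod 2) ≠ 0 := by
  intro h
  apply hβ
  funext i
  have := congrFun h (Fin.castSucc i)
  simpa [Fin.snoc_castSucc] using this

lemma phi_ek : phi s (ek (s+1)) = Polynomial.C (ek s) * Pd s s := by
  classical
  rw [ek, map_prod]
  have h1 : ∏ α ∈ Finset.univ.filter (fun α : Fin (s+1) → ZMod 2 => α ≠ 0),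
        phi s (∑ i, C (α i) * X i)
      = ∏ α ∈ Finset.univ.filter (fun α : Fin (s+1) → ZMod 2 => α ≠ 0),
        (Polynomial.C (lform (α ∘ Fin.castSucc))
          + Polynomial.C (C (α (Fin.last s))) * Polynomial.X) :=
    Finset.prod_congr rfl fun α _ => phi_lin α
  rw [h1, ← Finset.prod_filter_mul_prod_filter_not
    (Finset.univ.filter (fun α : Fin (s+1) → ZMod 2 => α ≠ 0))
    (fun α => α (Fin.last s) = 0)]
  congr 1
  · -- part with `α last = 0` gives `C (ek s)`
    rw [ek, map_prod]
    apply Finset.prod_nbij' (fun α => α ∘ Fin.castSucc) (fun β => Fin.snoc β 0)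
    · intro α hα
      simp only [Finset.mem_filter, Finset.mem_univ, true_and] at hα ⊢
      intro h
      apply hα.1
      funext i
      induction i using Fin.lastCases with
      | last => exact hα.2
      | cast i => exact congrFun h i
    · intro β hβ
      simp only [Finset.mem_filter, Finset.mem_univ, true_and] at hβ ⊢
      exact ⟨snoc_ne_zero_of_ne_zero hβ 0, Fin.snoc_last _ _⟩
    · intro α hα
      simp only [Finset.mem_filter, Finset.mem_univ, true_and] at hα
      funext i
      induction i using Fin.lastCases with
      | last => rw [Fin.snoc_last]; exact hα.2.symm
      | cast i => rw [Fin.snoc_castSucc]; rfl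
    · intro β _
      funext i
      exact Fin.snoc_castSucc _ _ _
    · intro α hα
      simp only [Finset.mem_filter, Finset.mem_univ, true_and] at hα
      rw [hα.2]
      simp only [map_zero, Polynomial.C_0, zero_mul, add_zero]
      rw [lform_def_eq]
  · -- part with `α last = 1` gives `Pd s s`
    rw [Pd, Wset_univ]
    apply Finset.prod_nbij' (fun α => α ∘ Fin.castSucc) (fun β => Fin.snoc β 1)
    · intro α _
      exact Finset.mem_univ _
    · intro β _
      simp only [Finset.mem_filter, Finset.mem_univ, true_and]
      constructor
      · intro h
        have := congrFun h (Fin.last s)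
        rw [Fin.snoc_last] at this
        simp only [Pi.zero_apply] at this
        exact absurd this (by decide)
      · rw [Fin.snoc_last]; decide
    · intro α hα
      simp only [Finset.mem_filter, Finset.mem_univ, true_and] at hα
      have hlast : α (Fin.last s) = 1 := (zmod2_cases _).resolve_left hα.2
      funext i
      induction i using Fin.lastCases with
      | last => rw [Fin.snoc_last]; exact hlast.symm
      | cast i => rw [Fin.snoc_castSucc]; rfl
    · intro β _
      funext i
      exact Fin.snoc_castSucc _ _ _
    · intro α hα
      simp only [Finset.mem_filter, Finset.mem_univ, true_and] at hα
      have hlast : α (Fin.last s) = 1 := (zmod2_cases _).resolve_left hα.2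
      rw [hlast]
      simp only [map_one, Polynomial.C_1, one_mul]
      rw [add_comm]

lemma Pd_coeff_one : (Pd s s).coeff 1 = ek s := by
  rw [(dickson s s (le_refl s)).2.2, ek, Wset_univ, ← Finset.filter_ne' Finset.univ 0]
  rfl

end Factor

theorem stmt10 (t r k : ℕ) (hr : r ≤ 2 ^ t - 1) (hk : 2 ≤ k)
    (mv : Fin k → ℕ) (hmvpos : ∀ i, 0 < mv i)
    (h1 : ek (k - 1) ^ (2 ^ t + 2 * r) ∉
        Ideal.span (Set.range fun i : Fin (k - 1) =>
          (X i : MvPolynomial (Fin (k - 1)) (ZMod 2)) ^ mv (Fin.castLE (Nat.sub_le k 1) i)))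
    (h2 : 2 ^ (t + k - 1) + r + 1 ≤ mv ⟨k - 1, by omega⟩) :
    ek k ^ (2 ^ t + r) ∉ Ideal.span (Set.range fun i : Fin k => X i ^ mv i) := by
  intro hmem
  obtain ⟨s, rfl⟩ : ∃ s, k = s + 1 := ⟨k - 1, by omega⟩
  have hrlt : r < 2 ^ t := by
    have : 0 < 2 ^ t := pow_pos (by norm_num) t
    omega
  have h2' : (2 ^ (t + s) + r) + 1 ≤ mv (Fin.last s) := by
    have h := h2
    rw [show t + (s + 1) - 1 = t + s from by omega] at h
    exact h
  obtain ⟨c, hc⟩ := (Submodule.mem_span_range_iff_exists_fun _).1 hmem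
  have hphi := congrArg (phi s) hc
  simp only [map_sum, map_pow, smul_eq_mul, map_mul] at hphi
  rw [phi_ek, mul_pow, ← Polynomial.C_pow] at hphi
  have hco := congrArg (fun p => Polynomial.coeff p (2 ^ (t + s) + r)) hphi
  rw [Polynomial.finset_sum_coeff, Polynomial.coeff_C_mul] at hco
  obtain ⟨hs1, hs2, _⟩ := dickson s s (le_refl s)
  have hA := lemA s (Pd s s) hs1 hs2 t r hrlt
  rw [Pd_coeff_one] at hA
  rw [hA, ← pow_add] at hco
  rw [Fin.sum_univ_castSucc] at hco
  have hlast0 : (phi s (c (Fin.last s))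
      * (phi s (X (Fin.last s))) ^ (mv (Fin.last s))).coeff (2 ^ (t + s) + r) = 0 := by
    rw [phi_X_last, Polynomial.coeff_mul_X_pow']
    rw [if_neg]
    omega
  rw [hlast0, add_zero] at hco
  have hterm : ∀ i : Fin s, (phi s (c (Fin.castSucc i))
        * (phi s (X (Fin.castSucc i))) ^ (mv (Fin.castSucc i))).coeff (2 ^ (t + s) + r)
      = (phi s (c (Fin.castSucc i))).coeff (2 ^ (t + s) + r)
        * (X i ^ mv (Fin.castSucc i)) := by
    intro i
    rw [phi_X_castSucc, ← Polynomial.C_pow, Polynomial.coeff_mul_C]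
  rw [Finset.sum_congr rfl (fun i _ => hterm i)] at hco
  have final : ek s ^ (2 ^ t + 2 * r) ∈ Ideal.span (Set.range fun i : Fin s =>
      (X i : MvPolynomial (Fin s) (ZMod 2)) ^ mv (Fin.castSucc i)) := by
    rw [show 2 ^ t + 2 * r = 2 ^ t + r + r from by ring, ← hco]
    exact Ideal.sum_mem _ fun i _ =>
      Ideal.mul_mem_left _ _ (Ideal.subset_span ⟨i, rfl⟩)
  exact h1 final
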